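/- arXiv:2311.11887 — 6 statements merged into one kernel-verified Lean document; each statement's English description precedes it below -/
import Mathlib

section
/- Let G = (V,E) be a connected, locally finite simple graph, let x ∈ V be a fixed base vertex, and let u : V → ℝ be harmonic. Then for every integer k ≥ 0, the quantity N(k) = ∑_{y : d(x,y)=k+1} d_in(y)·u(y)² − ∑_{y : d(x,y)=k} d_out(y)·u(y)² is non-negative. -/
/-! Let `B` be the ball of radius `k` about `x`. Multiplying the harmonic equation at `v ∈ B` by
`u v` and summing over `B`, the edges inside `B` contribute `-½ ∑ (u y - u v)² ≤ 0`, so the flux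
`∑ u v (u y - u v)` through the edges from the sphere `S k` to `S (k + 1)` is nonnegative. Counting
the same edges from both ends, `N(k) = ∑ (u y² - u v²) = ∑ (u y - u v)² + 2 ∑ u v (u y - u v)`. -/

/-- In-degree of `v` relative to base vertex `x`: the number of neighbors of `v`
whose distance to `x` is one less than that of `v`. -/
noncomputable def din {V : Type*} (G : SimpleGraph V) (x v : V) : ℕ :=
  {w | G.Adj v w ∧ G.dist x w = G.dist x v - 1}.ncard

/-- Out-degree of `v` relative to base vertex `x`: the number of neighbors of `v`
whose distance to `x` is one more than that of `v`. -/
noncomputable def dout {V : Type*} (G : SimpleGraph V) (x v : V) : ℕ :=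
  {w | G.Adj v w ∧ G.dist x w = G.dist x v + 1}.ncard

/-- `u` is harmonic: at every vertex the sum of differences over neighbors vanishes. -/
def GraphHarmonic {V : Type*} (G : SimpleGraph V) (u : V → ℝ) : Prop :=
  ∀ v : V, ∑ᶠ y ∈ G.neighborSet v, (u y - u v) = 0

/-- The discrete Almgren quantity `N(k)`. -/
noncomputable def almgrenN {V : Type*} (G : SimpleGraph V) (x : V) (u : V → ℝ) (k : ℕ) : ℝ :=
  (∑ᶠ y ∈ {y | G.dist x y = k + 1}, (din G x y : ℝ) * u y ^ 2) -
    ∑ᶠ y ∈ {y | G.dist x y = k}, (dout G x y : ℝ) * u y ^ 2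

open Finset

namespace SimpleGraph

variable {V : Type*} {G : SimpleGraph V} {x y : V} {n : ℕ}

lemma dist_le_dist_add_one_of_adj {v w : V} (h : G.Adj v w) : G.dist x w ≤ G.dist x v + 1 := by
  rcases h.diff_dist_adj (u := x) with h | h | h <;> omega

lemma exists_adj_dist_eq_of_dist_eq_succ (h : G.dist x y = n + 1) :
    ∃ z, G.Adj z y ∧ G.dist x z = n := by
  obtain ⟨p, hp⟩ := exists_walk_of_dist_ne_zero (G := G) (u := x) (v := y) (by omega)
  have hnil : ¬p.Nil := by rw [← Walk.length_eq_zero_iff]; omega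
  have hlen := dist_le p.dropLast
  rw [Walk.length_dropLast] at hlen
  have hstep := dist_le_dist_add_one_of_adj (x := x) (Walk.adj_penultimate hnil)
  exact ⟨p.penultimate, Walk.adj_penultimate hnil, by omega⟩

lemma Connected.finite_setOf_dist_le [G.LocallyFinite] (hG : G.Connected) (x : V) (n : ℕ) :
    {y | G.dist x y ≤ n}.Finite := by
  induction n with
  | zero =>
    exact (Set.finite_singleton x).subset fun y hy =>
      (hG.dist_eq_zero_iff.mp (Nat.le_zero.mp hy)).symm
  | succ n ih =>
    refine (ih.union (ih.biUnion fun v _ => (G.neighborSet v).toFinite)).subset fun y hy => ?_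
    rcases Nat.le_succ_iff.mp hy with hy | hy
    · exact Or.inl hy
    · obtain ⟨z, hz, hdz⟩ := exists_adj_dist_eq_of_dist_eq_succ hy
      exact Or.inr (Set.mem_biUnion hdz.le hz)

lemma sum_sum_filter_adj_comm {M : Type*} [AddCommMonoid M] [DecidableRel G.Adj]
    (s t : Finset V) (f : V → V → M) :
    ∑ v ∈ s, ∑ y ∈ t with G.Adj v y, f v y = ∑ y ∈ t, ∑ v ∈ s with G.Adj y v, f v y := by
  simp only [sum_filter]
  rw [sum_comm]
  simp only [G.adj_comm]

lemma sum_sum_filter_adj_mul_sub_nonpos [DecidableRel G.Adj] (s : Finset V) (u : V → ℝ) :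
    ∑ v ∈ s, ∑ y ∈ s with G.Adj v y, u v * (u y - u v) ≤ 0 := by
  set I := ∑ v ∈ s, ∑ y ∈ s with G.Adj v y, u v * (u y - u v)
  have hswap : I = ∑ v ∈ s, ∑ y ∈ s with G.Adj v y, u y * (u v - u y) :=
    sum_sum_filter_adj_comm s s _
  have hsymm : I + I = -∑ v ∈ s, ∑ y ∈ s with G.Adj v y, (u y - u v) ^ 2 := by
    nth_rw 2 [hswap]
    rw [← sum_add_distrib, ← sum_neg_distrib]
    refine sum_congr rfl fun v _ => ?_
    rw [← sum_add_distrib, ← sum_neg_distrib]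
    exact sum_congr rfl fun y _ => by ring
  have hsq : 0 ≤ ∑ v ∈ s, ∑ y ∈ s with G.Adj v y, (u y - u v) ^ 2 :=
    sum_nonneg fun v _ => sum_nonneg fun y _ => sq_nonneg _
  linarith

lemma din_eq_card_filter [DecidableRel G.Adj] {s : Finset V} (hs : ∀ w, w ∈ s ↔ G.dist x w = n)
    (hy : G.dist x y = n + 1) : din G x y = #{w ∈ s | G.Adj y w} := by
  rw [din, hy, Nat.add_sub_cancel, ← Set.ncard_coe_finset]
  congr
  ext w
  simp [hs, and_comm]

lemma dout_eq_card_filter [DecidableRel G.Adj] {t : Finset V} (ht : ∀ w, w ∈ t ↔ G.dist x w = n + 1)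
    (hy : G.dist x y = n) : dout G x y = #{w ∈ t | G.Adj y w} := by
  rw [dout, hy, ← Set.ncard_coe_finset]
  congr
  ext w
  simp [ht, and_comm]

end SimpleGraph

open SimpleGraph

section

variable {V : Type*} {G : SimpleGraph V} {u : V → ℝ}

lemma GraphHarmonic.sum_neighborFinset_sub [G.LocallyFinite] (hu : GraphHarmonic G u) (v : V) :
    ∑ y ∈ G.neighborFinset v, (u y - u v) = 0 := by
  rw [← finsum_mem_coe_finset, coe_neighborFinset]
  exact hu v

lemma GraphHarmonic.sum_sum_filter_adj_mul_sub_nonneg [G.LocallyFinite] [DecidableEq V]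
    [DecidableRel G.Adj] (hu : GraphHarmonic G u) {s t : Finset V} (hst : Disjoint s t)
    (hnbr : ∀ v ∈ s, G.neighborFinset v ⊆ s ∪ t) :
    0 ≤ ∑ v ∈ s, ∑ y ∈ t with G.Adj v y, u v * (u y - u v) := by
  have hsplit : ∀ v ∈ s, ∑ y ∈ s with G.Adj v y, u v * (u y - u v) +
      ∑ y ∈ t with G.Adj v y, u v * (u y - u v) = 0 := fun v hv => by
    have hN : G.neighborFinset v = {y ∈ s ∪ t | G.Adj v y} := by
      ext y
      simp only [mem_filter, mem_neighborFinset]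
      exact ⟨fun h => ⟨hnbr v hv ((mem_neighborFinset ..).mpr h), h⟩, And.right⟩
    rw [← sum_union (disjoint_filter_filter hst), ← filter_union, ← hN, ← mul_sum,
      hu.sum_neighborFinset_sub, mul_zero]
  have hzero := sum_congr rfl hsplit
  rw [sum_add_distrib, sum_const_zero] at hzero
  linarith [sum_sum_filter_adj_mul_sub_nonpos (G := G) s u]

lemma GraphHarmonic.sum_sum_filter_adj_dist_mul_sub_nonneg [G.LocallyFinite] [DecidableRel G.Adj]
    (hG : G.Connected) (hu : GraphHarmonic G u) {x : V} {k : ℕ} {s t : Finset V}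
    (hs : ∀ y, y ∈ s ↔ G.dist x y = k) (ht : ∀ y, y ∈ t ↔ G.dist x y = k + 1) :
    0 ≤ ∑ v ∈ s, ∑ y ∈ t with G.Adj v y, u v * (u y - u v) := by
  classical
  set B := (hG.finite_setOf_dist_le x k).toFinset
  have hB : ∀ y, y ∈ B ↔ G.dist x y ≤ k := by simp [B]
  have hflux := hu.sum_sum_filter_adj_mul_sub_nonneg (s := B) (t := t)
    (disjoint_left.mpr fun y hyB hyt => by rw [hB] at hyB; rw [ht] at hyt; omega)
    (fun v hv y hy => by
      have := dist_le_dist_add_one_of_adj (x := x) ((mem_neighborFinset ..).mp hy)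
      rw [hB] at hv
      rw [mem_union, hB, ht]
      omega)
  have hsB : s ⊆ B := fun v hv => (hB v).mpr ((hs v).mp hv).le
  have hvanish : ∀ v ∈ B, v ∉ s → ∑ y ∈ t with G.Adj v y, u v * (u y - u v) = 0 :=
    fun v hvB hvs => sum_eq_zero fun y hy => by
      rw [mem_filter, ht] at hy
      have := dist_le_dist_add_one_of_adj (x := x) hy.2
      rw [hB] at hvB
      rw [hs] at hvs
      omega
  rwa [← sum_subset hsB hvanish] at hflux

lemma almgrenN_eq_sum_sum_filter_adj [DecidableRel G.Adj] {x : V} {k : ℕ} {s t : Finset V}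
    (hs : ∀ y, y ∈ s ↔ G.dist x y = k) (ht : ∀ y, y ∈ t ↔ G.dist x y = k + 1) :
    almgrenN G x u k = ∑ v ∈ s, ∑ y ∈ t with G.Adj v y, (u y ^ 2 - u v ^ 2) := by
  have hs' : {y | G.dist x y = k} = ↑s := Set.ext fun y => (hs y).symm
  have ht' : {y | G.dist x y = k + 1} = ↑t := Set.ext fun y => (ht y).symm
  have hin : ∑ y ∈ t, (din G x y : ℝ) * u y ^ 2 = ∑ y ∈ t, ∑ v ∈ s with G.Adj y v, u y ^ 2 :=
    sum_congr rfl fun y hy => by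
      rw [din_eq_card_filter hs ((ht y).mp hy), sum_const, nsmul_eq_mul]
  have hout : ∑ v ∈ s, (dout G x v : ℝ) * u v ^ 2 = ∑ v ∈ s, ∑ y ∈ t with G.Adj v y, u v ^ 2 :=
    sum_congr rfl fun v hv => by
      rw [dout_eq_card_filter ht ((hs v).mp hv), sum_const, nsmul_eq_mul]
  rw [almgrenN, hs', ht', finsum_mem_coe_finset, finsum_mem_coe_finset, hin, hout,
    ← sum_sum_filter_adj_comm]
  simp only [sum_sub_distrib]

end

/-- for a harmonic function on a connected, locally finite simple graph,
the discrete Almgren quantity `N(k)` is non-negative for every `k ≥ 0`. -/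
theorem almgren_nonneg {V : Type*} (G : SimpleGraph V) (hconn : G.Connected)
    (hlf : ∀ v : V, (G.neighborSet v).Finite) (x : V) (u : V → ℝ)
    (hu : GraphHarmonic G u) (k : ℕ) :
    0 ≤ almgrenN G x u k := by
  classical
  let _ : G.LocallyFinite := fun v => (hlf v).fintype
  obtain ⟨S, hS⟩ : ∃ S : ℕ → Finset V, ∀ n y, y ∈ S n ↔ G.dist x y = n :=
    ⟨fun n => ((hconn.finite_setOf_dist_le x n).subset (t := {y | G.dist x y = n})
      fun _ => le_of_eq).toFinset, by simp⟩
  have hflux := hu.sum_sum_filter_adj_dist_mul_sub_nonneg hconn (hS k) (hS (k + 1))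
  have hsq : 0 ≤ ∑ v ∈ S k, ∑ y ∈ S (k + 1) with G.Adj v y, (u y - u v) ^ 2 :=
    sum_nonneg fun v _ => sum_nonneg fun y _ => sq_nonneg _
  have hexpand : ∑ v ∈ S k, ∑ y ∈ S (k + 1) with G.Adj v y, (u y ^ 2 - u v ^ 2) =
      ∑ v ∈ S k, ∑ y ∈ S (k + 1) with G.Adj v y, (u y - u v) ^ 2 +
        2 * ∑ v ∈ S k, ∑ y ∈ S (k + 1) with G.Adj v y, u v * (u y - u v) := by
    simp only [mul_sum, ← sum_add_distrib]
    exact sum_congr rfl fun v _ => sum_congr rfl fun y _ => by ring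
  rw [almgrenN_eq_sum_sum_filter_adj (hS k) (hS (k + 1)), hexpand]
  linarith
end

section
/- Let G = (V,E) be a connected, locally finite simple graph, let x ∈ V be a fixed base vertex, and let u : V → ℝ be harmonic. Then the quantity N(k) = ∑_{y : d(x,y)=k+1} d_in(y)·u(y)² − ∑_{y : d(x,y)=k} d_out(y)·u(y)² satisfies N(k+1) ≥ N(k) for every integer k ≥ 0. -/
section Aux

variable {V : Type*} {G : SimpleGraph V} {x : V}

/-- Adjacent vertices have distances from `x` differing by at most one. -/
lemma aux_adj_dist_le (hconn : G.Connected) {v w : V} (h : G.Adj v w) :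
    G.dist x w ≤ G.dist x v + 1 := by
  have h1 : G.dist v w = 1 := SimpleGraph.dist_eq_one_iff_adj.mpr h
  have := hconn.dist_triangle (u := x) (v := v) (w := w)
  omega

/-- Every vertex at distance `n+1` has a neighbor at distance `n`. -/
lemma aux_exists_pred (hconn : G.Connected) {y : V} {n : ℕ} (hy : G.dist x y = n + 1) :
    ∃ w, G.Adj y w ∧ G.dist x w = n := by
  have hr : G.Reachable x y := hconn x y
  obtain ⟨p, hp⟩ := hr.exists_walk_length_eq_dist
  have hne : y ≠ x := by
    intro h; subst h
    simp [SimpleGraph.dist_self] at hy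
  obtain ⟨w, hadj, q, hq⟩ := SimpleGraph.Walk.exists_eq_cons_of_ne hne p.reverse
  have hlen : q.length = n := by
    have := congrArg SimpleGraph.Walk.length hq
    simp [SimpleGraph.Walk.length_cons] at this
    omega
  refine ⟨w, hadj, le_antisymm ?_ ?_⟩
  · have := SimpleGraph.dist_le q.reverse
    simpa [hlen] using this
  · have := aux_adj_dist_le (x := x) hconn hadj.symm
    omega

/-- Spheres around `x` are finite in a connected locally finite graph. -/
lemma aux_sphere_finite (hconn : G.Connected) (hlf : ∀ v : V, (G.neighborSet v).Finite)
    (n : ℕ) : {y | G.dist x y = n}.Finite := by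
  induction n with
  | zero =>
    apply Set.Finite.subset (Set.finite_singleton x)
    intro y hy
    simp only [Set.mem_setOf_eq] at hy
    have := (hconn.dist_eq_zero_iff (u := x) (v := y)).mp hy
    simp [this.symm]
  | succ n ih =>
    apply Set.Finite.subset (Set.Finite.biUnion ih (fun v _ => hlf v))
    intro y hy
    simp only [Set.mem_setOf_eq] at hy
    obtain ⟨w, hadj, hw⟩ := aux_exists_pred hconn hy
    exact Set.mem_biUnion hw hadj.symm

end Aux

/-- for a harmonic function on a connected, locally finite simple graph,
the discrete Almgren quantity satisfies `N(k+1) ≥ N(k)` for every `k ≥ 0`. -/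
theorem almgren_monotone {V : Type*} (G : SimpleGraph V) (hconn : G.Connected)
    (hlf : ∀ v : V, (G.neighborSet v).Finite) (x : V) (u : V → ℝ)
    (hu : GraphHarmonic G u) (k : ℕ) :
    almgrenN G x u k ≤ almgrenN G x u (k + 1) := by
  classical
  -- Finsets: spheres
  set S : ℕ → Finset V := fun n => (aux_sphere_finite (x := x) hconn hlf n).toFinset with hS
  have hmemS : ∀ n (v : V), v ∈ S n ↔ G.dist x v = n := by
    intro n v; simp [hS, Set.Finite.mem_toFinset]
  -- Edge pairs between spheres
  set P : ℕ → ℕ → Finset (V × V) :=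
    fun a b => ((S a) ×ˢ (S b)).filter (fun p => G.Adj p.1 p.2) with hP
  have hmemP : ∀ a b (p : V × V),
      p ∈ P a b ↔ G.dist x p.1 = a ∧ G.dist x p.2 = b ∧ G.Adj p.1 p.2 := by
    intro a b p
    simp [hP, Finset.mem_filter, Finset.mem_product, hmemS, and_assoc]
  -- swap lemma
  have hswap : ∀ (a b : ℕ) (f : V → V → ℝ),
      ∑ p ∈ P a b, f p.1 p.2 = ∑ p ∈ P b a, f p.2 p.1 := by
    intro a b f
    refine Finset.sum_nbij' (fun p => Prod.swap p) (fun p => Prod.swap p) ?_ ?_ ?_ ?_ ?_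
    · intro p hp
      rw [hmemP] at hp ⊢
      exact ⟨hp.2.1, hp.1, hp.2.2.symm⟩
    · intro p hp
      rw [hmemP] at hp ⊢
      exact ⟨hp.2.1, hp.1, hp.2.2.symm⟩
    · intro p _; simp
    · intro p _; simp
    · intro p _; simp
  -- sum over pairs as iterated sum
  have hsum_P : ∀ (a b : ℕ) (f : V → V → ℝ),
      ∑ p ∈ P a b, f p.1 p.2 = ∑ v ∈ S a, ∑ w ∈ (S b).filter (G.Adj v), f v w := by
    intro a b f
    rw [hP]
    rw [Finset.sum_filter, Finset.sum_product]
    exact Finset.sum_congr rfl fun v _ => (Finset.sum_filter _ _).symm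
  -- Almgren quantity as edge sum
  have halm : ∀ n : ℕ, almgrenN G x u n = ∑ p ∈ P n (n + 1), (u p.2 ^ 2 - u p.1 ^ 2) := by
    intro n
    have h1 : ∑ᶠ y ∈ {y | G.dist x y = n + 1}, (din G x y : ℝ) * u y ^ 2
        = ∑ y ∈ S (n + 1), (din G x y : ℝ) * u y ^ 2 :=
      finsum_mem_eq_finite_toFinset_sum _ _
    have h2 : ∑ᶠ y ∈ {y | G.dist x y = n}, (dout G x y : ℝ) * u y ^ 2
        = ∑ y ∈ S n, (dout G x y : ℝ) * u y ^ 2 :=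
      finsum_mem_eq_finite_toFinset_sum _ _
    have hdin : ∀ y ∈ S (n + 1), (din G x y : ℝ) * u y ^ 2
        = ∑ w ∈ (S n).filter (G.Adj y), u y ^ 2 := by
      intro y hy
      rw [hmemS] at hy
      have : din G x y = ((S n).filter (G.Adj y)).card := by
        rw [din]
        have hset : {w | G.Adj y w ∧ G.dist x w = G.dist x y - 1}
            = ↑((S n).filter (G.Adj y)) := by
          ext w
          simp [Finset.mem_filter, hmemS, hy, and_comm]
        rw [hset, Set.ncard_coe_finset]
      rw [this, Finset.sum_const, nsmul_eq_mul]
    have hdout : ∀ y ∈ S n, (dout G x y : ℝ) * u y ^ 2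
        = ∑ w ∈ (S (n + 1)).filter (G.Adj y), u y ^ 2 := by
      intro y hy
      rw [hmemS] at hy
      have : dout G x y = ((S (n + 1)).filter (G.Adj y)).card := by
        rw [dout]
        have hset : {w | G.Adj y w ∧ G.dist x w = G.dist x y + 1}
            = ↑((S (n + 1)).filter (G.Adj y)) := by
          ext w
          simp [Finset.mem_filter, hmemS, hy, and_comm]
        rw [hset, Set.ncard_coe_finset]
      rw [this, Finset.sum_const, nsmul_eq_mul]
    rw [almgrenN, h1, h2, Finset.sum_congr rfl hdin, Finset.sum_congr rfl hdout,
      ← hsum_P (n + 1) n (fun v w => u v ^ 2), ← hsum_P n (n + 1) (fun v w => u v ^ 2),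
      hswap (n + 1) n (fun v w => u v ^ 2), ← Finset.sum_sub_distrib]
  -- harmonicity on each sphere, localized
  set D : ℕ → ℝ := fun j => ∑ p ∈ P (k + 1) j, 2 * u p.1 * (u p.2 - u p.1) with hD
  have hharm : D k + D (k + 1) + D (k + 2) = 0 := by
    rw [hD]
    simp only
    rw [hsum_P (k+1) k (fun a b => 2 * u a * (u b - u a)),
      hsum_P (k+1) (k+1) (fun a b => 2 * u a * (u b - u a)),
      hsum_P (k+1) (k+2) (fun a b => 2 * u a * (u b - u a)),
      ← Finset.sum_add_distrib, ← Finset.sum_add_distrib]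
    apply Finset.sum_eq_zero
    intro v hv
    rw [hmemS] at hv
    -- the three filtered sphere-pieces partition the neighbor finset of v
    have hzero : ∑ w ∈ (hlf v).toFinset, (u w - u v) = 0 := by
      have := hu v
      rwa [finsum_mem_eq_finite_toFinset_sum _ (hlf v)] at this
    have hdisj1 : Disjoint ((S k).filter (G.Adj v)) ((S (k+1)).filter (G.Adj v)) := by
      rw [Finset.disjoint_left]
      intro w hw hw'
      simp only [Finset.mem_filter, hmemS] at hw hw'
      omega
    have hdisj2 : Disjoint (((S k).filter (G.Adj v)) ∪ ((S (k+1)).filter (G.Adj v)))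
        ((S (k+2)).filter (G.Adj v)) := by
      rw [Finset.disjoint_left]
      intro w hw hw'
      simp only [Finset.mem_union, Finset.mem_filter, hmemS] at hw hw'
      omega
    have hcover : (((S k).filter (G.Adj v)) ∪ ((S (k+1)).filter (G.Adj v)))
        ∪ ((S (k+2)).filter (G.Adj v)) = (hlf v).toFinset := by
      ext w
      simp only [Finset.mem_union, Finset.mem_filter, hmemS, Set.Finite.mem_toFinset,
        SimpleGraph.mem_neighborSet]
      constructor
      · rintro ((⟨_, h⟩ | ⟨_, h⟩) | ⟨_, h⟩) <;> exact h
      · intro h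
        have h1 : G.dist x w ≤ G.dist x v + 1 := aux_adj_dist_le hconn h
        have h2 : G.dist x v ≤ G.dist x w + 1 := aux_adj_dist_le hconn h.symm
        rw [hv] at h1 h2
        have : G.dist x w = k ∨ G.dist x w = k + 1 ∨ G.dist x w = k + 2 := by omega
        rcases this with h' | h' | h'
        · exact Or.inl (Or.inl ⟨h', h⟩)
        · exact Or.inl (Or.inr ⟨h', h⟩)
        · exact Or.inr ⟨h', h⟩
    have hsplit : ∑ w ∈ (S k).filter (G.Adj v), (u w - u v)
        + ∑ w ∈ (S (k+1)).filter (G.Adj v), (u w - u v)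
        + ∑ w ∈ (S (k+2)).filter (G.Adj v), (u w - u v) = 0 := by
      rw [← Finset.sum_union hdisj1, ← Finset.sum_union hdisj2, hcover]
      exact hzero
    have expand : ∀ s : Finset V, ∑ w ∈ s, 2 * u v * (u w - u v)
        = 2 * u v * ∑ w ∈ s, (u w - u v) := by
      intro s; rw [Finset.mul_sum]
    rw [expand, expand, expand, ← mul_add, ← mul_add, hsplit, mul_zero]
  -- horizontal term is nonpositive
  have hDm : D (k + 1) ≤ 0 := by
    have h1 : D (k + 1) = ∑ p ∈ P (k + 1) (k + 1), 2 * u p.2 * (u p.1 - u p.2) := by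
      rw [hD]
      exact hswap (k + 1) (k + 1) (fun a b => 2 * u a * (u b - u a))
    have h2 : D (k + 1) + D (k + 1)
        = ∑ p ∈ P (k + 1) (k + 1), (-(2 * (u p.1 - u p.2) ^ 2)) := by
      nth_rewrite 2 [h1]
      rw [hD]
      simp only
      rw [← Finset.sum_add_distrib]
      exact Finset.sum_congr rfl fun p _ => by ring
    have h3 : ∑ p ∈ P (k + 1) (k + 1), (-(2 * (u p.1 - u p.2) ^ 2)) ≤ 0 := by
      apply Finset.sum_nonpos
      intro p _
      nlinarith [sq_nonneg (u p.1 - u p.2)]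
    linarith
  -- final computation
  have key : almgrenN G x u (k + 1) - almgrenN G x u k
      = (∑ p ∈ P (k + 1) (k + 2), (u p.2 - u p.1) ^ 2)
        + (∑ p ∈ P (k + 1) k, (u p.2 - u p.1) ^ 2) + (D (k + 2) + D k) := by
    have e1 : ∑ p ∈ P (k + 1) (k + 2), (u p.2 ^ 2 - u p.1 ^ 2)
        = (∑ p ∈ P (k + 1) (k + 2), (u p.2 - u p.1) ^ 2) + D (k + 2) := by
      rw [hD]
      simp only
      rw [← Finset.sum_add_distrib]
      exact Finset.sum_congr rfl fun p _ => by ring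
    have e2 : ∑ p ∈ P (k + 1) k, (u p.1 ^ 2 - u p.2 ^ 2)
        = -((∑ p ∈ P (k + 1) k, (u p.2 - u p.1) ^ 2) + D k) := by
      rw [hD]
      simp only
      rw [← Finset.sum_add_distrib, ← Finset.sum_neg_distrib]
      exact Finset.sum_congr rfl fun p _ => by ring
    rw [halm (k + 1), halm k,
      hswap k (k + 1) (fun a b => u b ^ 2 - u a ^ 2),
      show k + 1 + 1 = k + 2 from rfl, e1, e2]
    ring
  have hsq1 : (0:ℝ) ≤ ∑ p ∈ P (k + 1) (k + 2), (u p.2 - u p.1) ^ 2 :=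
    Finset.sum_nonneg fun p _ => sq_nonneg _
  have hsq2 : (0:ℝ) ≤ ∑ p ∈ P (k + 1) k, (u p.2 - u p.1) ^ 2 :=
    Finset.sum_nonneg fun p _ => sq_nonneg _
  have : D (k + 2) + D k = -D (k + 1) := by linarith
  linarith [key]
end

section
/- Let G = (V,E) be a connected, locally finite simple graph, let x ∈ V be a fixed base vertex, let k ≥ 1 be an integer, and let u : V → ℝ be harmonic. Then ∑_{z ∈ V_k} 2·u(z)·∑_{(z,y) ∈ E, y ∈ V_{k+1}} (u(y) − u(z)) ≥ ∑_{z ∈ V_k} ∑_{(z,w) ∈ E, w ∈ V_{k−1}} 2·u(z)·(u(z) − u(w)). -/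
open Finset

lemma exists_adj_of_dist_succ {V : Type*} (G : SimpleGraph V) (x z : V) (n : ℕ)
    (h : G.dist x z = n + 1) : ∃ v, G.Adj v z ∧ G.dist x v ≤ n := by
  have hne : G.dist x z ≠ 0 := by omega
  obtain ⟨p, hp⟩ := SimpleGraph.exists_walk_of_dist_ne_zero hne
  have hrev : p.reverse.length = n + 1 := by rw [SimpleGraph.Walk.length_reverse, hp, h]
  cases hq : p.reverse with
  | nil => rw [hq] at hrev; simp at hrev
  | cons hadj q =>
    rw [hq] at hrev
    simp [SimpleGraph.Walk.length_cons] at hrev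
    refine ⟨_, hadj.symm, ?_⟩
    calc G.dist x _ = G.dist _ x := SimpleGraph.dist_comm ..
    _ ≤ q.length := SimpleGraph.dist_le q
    _ ≤ n := by omega

lemma ball_finite {V : Type*} (G : SimpleGraph V) (hconn : G.Connected)
    (hlf : ∀ v : V, (G.neighborSet v).Finite) (x : V) :
    ∀ n : ℕ, {z : V | G.dist x z ≤ n}.Finite := by
  intro n
  induction n with
  | zero =>
    apply Set.Finite.subset (Set.finite_singleton x)
    intro z hz
    simp only [Set.mem_setOf_eq, Nat.le_zero] at hz
    rcases SimpleGraph.dist_eq_zero_iff_eq_or_not_reachable.mp hz with h | h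
    · simp [h]
    · exact absurd (hconn x z) h
  | succ n ih =>
    have hsub : {z : V | G.dist x z ≤ n + 1} ⊆
        {z : V | G.dist x z ≤ n} ∪ ⋃ v ∈ {z : V | G.dist x z ≤ n}, G.neighborSet v := by
      intro z hz
      simp only [Set.mem_setOf_eq] at hz
      rcases Nat.lt_or_ge (G.dist x z) (n+1) with h | h
      · left; simpa using Nat.lt_succ_iff.mp h
      · have heq : G.dist x z = n + 1 := le_antisymm hz h
        obtain ⟨v, hadj, hv⟩ := exists_adj_of_dist_succ G x z n heq
        right
        exact Set.mem_biUnion hv hadj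
    exact ((ih.union (ih.biUnion (fun v _ => hlf v)))).subset hsub

/-- for a harmonic `u` and `k ≥ 1`,
`∑_{z ∈ V_k} 2u(z) ∑_{(z,y) ∈ E, y ∈ V_{k+1}} (u(y)−u(z))
  ≥ ∑_{z ∈ V_k} ∑_{(z,w) ∈ E, w ∈ V_{k−1}} 2u(z)(u(z)−u(w))`. -/
theorem outer_flux_ge_inner_flux {V : Type*} (G : SimpleGraph V) (hconn : G.Connected)
    (hlf : ∀ v : V, (G.neighborSet v).Finite) (x : V) (k : ℕ) (hk : 1 ≤ k)
    (u : V → ℝ) (hu : GraphHarmonic G u) :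
    (∑ᶠ z ∈ {z | G.dist x z = k},
        2 * u z * ∑ᶠ y ∈ {y | G.Adj z y ∧ G.dist x y = k + 1}, (u y - u z)) ≥
      ∑ᶠ z ∈ {z | G.dist x z = k},
        ∑ᶠ w ∈ {w | G.Adj z w ∧ G.dist x w = k - 1}, 2 * u z * (u z - u w) := by
  classical
  -- finiteness of the sphere
  have hSfin : ({z : V | G.dist x z = k}).Finite :=
    (ball_finite G hconn hlf x k).subset (fun z hz => le_of_eq hz)
  set S : Finset V := hSfin.toFinset with hS
  have hmemS : ∀ z, z ∈ S ↔ G.dist x z = k := by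
    intro z; simp [hS, Set.Finite.mem_toFinset]
  -- neighbor finsets
  set N : V → Finset V := fun z => (hlf z).toFinset with hN
  have hmemN : ∀ z y, y ∈ N z ↔ G.Adj z y := by
    intro z y; simp [hN, Set.Finite.mem_toFinset]
  -- adjacency changes dist by at most 1
  have hdistadj : ∀ z y : V, G.Adj z y →
      G.dist x y ≤ G.dist x z + 1 ∧ G.dist x z ≤ G.dist x y + 1 := by
    intro z y hzy
    have h1 : G.dist z y = 1 := SimpleGraph.dist_eq_one_iff_adj.mpr hzy
    have h2 : G.dist y z = 1 := SimpleGraph.dist_eq_one_iff_adj.mpr hzy.symm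
    constructor
    · have := hconn.dist_triangle (u := x) (v := z) (w := y); omega
    · have := hconn.dist_triangle (u := x) (v := y) (w := z); omega
  -- the three neighbor classes
  have hNfilter : ∀ z y, G.dist x z = k → y ∈ N z →
      G.dist x y = k - 1 ∨ G.dist x y = k ∨ G.dist x y = k + 1 := by
    intro z y hz hy
    have := hdistadj z y ((hmemN z y).mp hy)
    omega
  -- rewrite the finsums into Finset sums
  have hL : (∑ᶠ z ∈ {z : V | G.dist x z = k},
        2 * u z * ∑ᶠ y ∈ {y | G.Adj z y ∧ G.dist x y = k + 1}, (u y - u z))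
      = ∑ z ∈ S, 2 * u z * ∑ y ∈ (N z).filter (fun y => G.dist x y = k + 1), (u y - u z) := by
    rw [finsum_mem_eq_finite_toFinset_sum _ hSfin]
    apply Finset.sum_congr rfl
    intro z hz
    congr 1
    have hfin : ({y | G.Adj z y ∧ G.dist x y = k + 1}).Finite :=
      (hlf z).subset (fun y hy => hy.1)
    rw [finsum_mem_eq_finite_toFinset_sum _ hfin]
    apply Finset.sum_congr _ (fun _ _ => rfl)
    ext y
    simp [Set.Finite.mem_toFinset, hmemN]
  have hR : (∑ᶠ z ∈ {z : V | G.dist x z = k},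
        ∑ᶠ w ∈ {w | G.Adj z w ∧ G.dist x w = k - 1}, 2 * u z * (u z - u w))
      = ∑ z ∈ S, ∑ w ∈ (N z).filter (fun w => G.dist x w = k - 1), 2 * u z * (u z - u w) := by
    rw [finsum_mem_eq_finite_toFinset_sum _ hSfin]
    apply Finset.sum_congr rfl
    intro z hz
    have hfin : ({w | G.Adj z w ∧ G.dist x w = k - 1}).Finite :=
      (hlf z).subset (fun w hw => hw.1)
    rw [finsum_mem_eq_finite_toFinset_sum _ hfin]
    apply Finset.sum_congr _ (fun _ _ => rfl)
    ext w
    simp [Set.Finite.mem_toFinset, hmemN]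
  rw [ge_iff_le, hL, hR]
  -- harmonicity in Finset form
  have hharm : ∀ z : V, ∑ y ∈ N z, (u y - u z) = 0 := by
    intro z
    have := hu z
    rwa [finsum_mem_eq_finite_toFinset_sum _ (hlf z)] at this
  -- split the harmonic sum at a sphere vertex
  have hsplit : ∀ z, G.dist x z = k →
      (∑ y ∈ (N z).filter (fun y => G.dist x y = k - 1), (u y - u z))
      + (∑ y ∈ (N z).filter (fun y => G.dist x y = k), (u y - u z))
      + (∑ y ∈ (N z).filter (fun y => G.dist x y = k + 1), (u y - u z)) = 0 := by
    intro z hz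
    rw [← hharm z]
    rw [← Finset.sum_filter_add_sum_filter_not (N z) (fun y => G.dist x y = k - 1)]
    have h1 : ∑ y ∈ (N z).filter (fun y => ¬ G.dist x y = k - 1), (u y - u z)
        = (∑ y ∈ (N z).filter (fun y => G.dist x y = k), (u y - u z))
        + (∑ y ∈ (N z).filter (fun y => G.dist x y = k + 1), (u y - u z)) := by
      rw [← Finset.sum_filter_add_sum_filter_not ((N z).filter (fun y => ¬ G.dist x y = k - 1))
          (fun y => G.dist x y = k)]
      congr 1
      · apply Finset.sum_congr _ (fun _ _ => rfl)
        rw [Finset.filter_filter]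
        apply Finset.filter_congr
        intro y hy
        have := hNfilter z y hz hy
        constructor <;> intro h
        · omega
        · exact ⟨by omega, h⟩
      · apply Finset.sum_congr _ (fun _ _ => rfl)
        rw [Finset.filter_filter]
        apply Finset.filter_congr
        intro y hy
        have := hNfilter z y hz hy
        constructor <;> intro h
        · omega
        · omega
    rw [h1]
    ring
  -- reduce to nonnegativity of inner-sphere Dirichlet energy
  have key : ∀ z, G.dist x z = k →
      2 * u z * ∑ y ∈ (N z).filter (fun y => G.dist x y = k + 1), (u y - u z)
      - ∑ w ∈ (N z).filter (fun w => G.dist x w = k - 1), 2 * u z * (u z - u w)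
      = ∑ y ∈ (N z).filter (fun y => G.dist x y = k), 2 * u z * (u z - u y) := by
    intro z hz
    have h := hsplit z hz
    have e2 : ∀ (s : Finset V), (∑ w ∈ s, 2 * u z * (u z - u w))
        = -(2 * u z * ∑ w ∈ s, (u w - u z)) := by
      intro s
      rw [Finset.mul_sum, ← Finset.sum_neg_distrib]
      exact Finset.sum_congr rfl (fun w _ => by ring)
    rw [e2, e2]
    linear_combination (2 * u z) * h
  have hgoal : ∑ z ∈ S, ∑ w ∈ (N z).filter (fun w => G.dist x w = k - 1), 2 * u z * (u z - u w)
      ≤ ∑ z ∈ S, 2 * u z * ∑ y ∈ (N z).filter (fun y => G.dist x y = k + 1), (u y - u z) := by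
    rw [← sub_nonneg, ← Finset.sum_sub_distrib]
    have hrw : ∑ z ∈ S, (2 * u z * ∑ y ∈ (N z).filter (fun y => G.dist x y = k + 1), (u y - u z)
        - ∑ w ∈ (N z).filter (fun w => G.dist x w = k - 1), 2 * u z * (u z - u w))
        = ∑ z ∈ S, ∑ y ∈ S, if G.Adj z y then 2 * u z * (u z - u y) else 0 := by
      apply Finset.sum_congr rfl
      intro z hz
      rw [key z ((hmemS z).mp hz)]
      have hset : (N z).filter (fun y => G.dist x y = k)
          = S.filter (fun y => G.Adj z y) := by
        ext y
        simp only [Finset.mem_filter, hmemN, hmemS]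
        tauto
      rw [hset, Finset.sum_filter]
    rw [hrw]
    set T := ∑ z ∈ S, ∑ y ∈ S, (if G.Adj z y then 2 * u z * (u z - u y) else 0) with hT
    have hswap : T = ∑ z ∈ S, ∑ y ∈ S, (if G.Adj y z then 2 * u y * (u y - u z) else 0) := by
      rw [hT, Finset.sum_comm]
    have hTT : T + T = ∑ z ∈ S, ∑ y ∈ S,
        (if G.Adj z y then 2 * (u z - u y)^2 else 0) := by
      nth_rewrite 2 [hswap]
      rw [hT, ← Finset.sum_add_distrib]
      apply Finset.sum_congr rfl
      intro z _
      rw [← Finset.sum_add_distrib]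
      apply Finset.sum_congr rfl
      intro y _
      by_cases hzy : G.Adj z y
      · simp only [hzy, hzy.symm, if_true]
        ring
      · simp only [hzy, fun h => hzy (G.adj_symm h), if_neg, if_false]
        simp
        intro h
        exact absurd h.symm hzy
    have hTnn : 0 ≤ T + T := by
      rw [hTT]
      apply Finset.sum_nonneg
      intro z _
      apply Finset.sum_nonneg
      intro y _
      by_cases hzy : G.Adj z y <;> simp [hzy] <;> positivity
    linarith
  exact hgoal
end

section
/- Let G = (V,E) be a connected, locally finite simple graph, x ∈ V a fixed base vertex, and u : V → ℝ harmonic. Let 0 ≤ a ≤ b be integers and suppose G is locally expansive in {v ∈ V : a ≤ d(x,v) ≤ b}, i.e. d_out(v) ≥ d_in(v) for all vertices v with a ≤ d(x,v) ≤ b. Then ∑_{y : d(x,y)=b+1} d_in(y)·u(y)² ≥ (b − a + 1)·N(a) + ∑_{y : d(x,y)=a} d_out(y)·u(y)². -/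
/-!
Group the edges by the distance layers of their endpoints. Then `N(k)` is the sum of
`u(w)² - u(v)²` over the edges from the sphere of radius `k` to that of radius `k + 1`.
For harmonic `u`, `∑_{w ∼ v} (u(w)² - u(v)²) = ∑_{w ∼ v} (u(w) - u(v))² ≥ 0`. Summing this
over the sphere of radius `k + 1`, the inward edges give `-N(k)`, the edges inside the sphere
cancel in pairs and the outward edges give `N(k + 1)`; hence `N` is nondecreasing.
Writing `I(k)`, `O(k)` for the in- and out-weighted sums over the sphere of radius `k`, we have
`N(k) = I(k + 1) - O(k)` and `I(k) ≤ O(k)` on the expansive layers, so telescoping from `a`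
to `b` gives `I(b + 1) ≥ O(a) + N(a) + ⋯ + N(b) ≥ O(a) + (b - a + 1) N(a)`.
-/

open Finset

theorem mul_add_le_of_monotone_sub {I O : ℕ → ℝ} {a b : ℕ} (hab : a ≤ b)
    (hmono : Monotone fun k => I (k + 1) - O k) (hIO : ∀ k, a < k → k ≤ b → I k ≤ O k) :
    ((b - a + 1 : ℕ) : ℝ) * (I (a + 1) - O a) + O a ≤ I (b + 1) := by
  induction b, hab using Nat.le_induction with
  | base => simp
  | succ b hab ih =>
    have hprev := ih fun k hak hkb => hIO k hak (by omega)
    have hstep : I (a + 1) - O a ≤ I (b + 1 + 1) - O (b + 1) := hmono (by omega)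
    have hlast := hIO (b + 1) (by omega) le_rfl
    rw [show b + 1 - a + 1 = (b - a + 1) + 1 by omega, Nat.cast_succ]
    linarith

namespace SimpleGraph

variable {V : Type*} {G : SimpleGraph V}

theorem Connected.exists_adj_dist_eq_of_dist_eq_add_one (hG : G.Connected) {x v : V} {k : ℕ}
    (h : G.dist x v = k + 1) : ∃ w, G.Adj v w ∧ G.dist x w = k := by
  obtain ⟨p, hp⟩ := (hG v x).exists_walk_length_eq_dist
  rw [dist_comm, h] at hp
  have hnil : ¬p.Nil := by rw [Walk.not_nil_iff_lt_length]; omega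
  have hadj := p.adj_snd hnil
  refine ⟨p.snd, hadj, ?_⟩
  have hle : G.dist x p.snd ≤ k := by
    rw [dist_comm]
    have := p.length_tail_add_one hnil
    exact (dist_le p.tail).trans (by omega)
  have := hadj.diff_dist_adj (u := x)
  omega

theorem Connected.finite_setOf_dist_eq [G.LocallyFinite] (hG : G.Connected) (x : V) (k : ℕ) :
    {y | G.dist x y = k}.Finite := by
  induction k with
  | zero => simp [hG.dist_eq_zero_iff]
  | succ k ih =>
    refine (ih.biUnion fun w _ => (G.neighborSet w).toFinite).subset fun y hy => ?_
    obtain ⟨w, hadj, hw⟩ := hG.exists_adj_dist_eq_of_dist_eq_add_one hy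
    exact Set.mem_biUnion hw hadj.symm

section SphereEdges

variable [G.LocallyFinite] (hG : G.Connected) (x : V)

noncomputable def distSphere (k : ℕ) : Finset V := (hG.finite_setOf_dist_eq x k).toFinset

noncomputable def neighborFinsetAt (v : V) (m : ℕ) : Finset V :=
  {w ∈ G.neighborFinset v | G.dist x w = m}

noncomputable def sphereEdgeSum (k m : ℕ) (F : V → V → ℝ) : ℝ :=
  ∑ v ∈ distSphere hG x k, ∑ w ∈ G.neighborFinsetAt x v m, F v w

variable {hG x}

@[simp]
theorem mem_distSphere {k : ℕ} {y : V} : y ∈ distSphere hG x k ↔ G.dist x y = k :=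
  Set.Finite.mem_toFinset _

@[simp]
theorem mem_neighborFinsetAt {v w : V} {m : ℕ} :
    w ∈ G.neighborFinsetAt x v m ↔ G.Adj v w ∧ G.dist x w = m := by
  simp [neighborFinsetAt]

variable (hG x)

theorem finsum_setOf_dist_eq (k : ℕ) (f : V → ℝ) :
    ∑ᶠ y ∈ {y | G.dist x y = k}, f y = ∑ y ∈ distSphere hG x k, f y :=
  finsum_mem_eq_finite_toFinset_sum f _

theorem sphereEdgeSum_comm (k m : ℕ) (F : V → V → ℝ) :
    sphereEdgeSum hG x k m F = sphereEdgeSum hG x m k fun v w => F w v :=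
  sum_comm' fun v w => by simp only [mem_distSphere, mem_neighborFinsetAt, adj_comm]; tauto

theorem sphereEdgeSum_eq_neg_of_antisymm {F : V → V → ℝ} (hF : ∀ v w, F w v = -F v w)
    (k m : ℕ) : sphereEdgeSum hG x k m F = -sphereEdgeSum hG x m k F := by
  have hswap : (fun v w => F w v) = fun v w => -F v w := funext₂ hF
  rw [sphereEdgeSum_comm hG x k m, hswap]
  simp only [sphereEdgeSum, sum_neg_distrib]

theorem sphereEdgeSum_self_eq_zero_of_antisymm {F : V → V → ℝ} (hF : ∀ v w, F w v = -F v w)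
    (k : ℕ) : sphereEdgeSum hG x k k F = 0 := by
  have := sphereEdgeSum_eq_neg_of_antisymm hG x hF k k
  linarith

theorem sum_neighborFinset_eq_add_add {v : V} {k : ℕ} (hv : G.dist x v = k + 1) (f : V → ℝ) :
    ∑ w ∈ G.neighborFinset v, f w =
      ∑ w ∈ G.neighborFinsetAt x v k, f w + ∑ w ∈ G.neighborFinsetAt x v (k + 1), f w +
        ∑ w ∈ G.neighborFinsetAt x v (k + 2), f w := by
  rw [← sum_fiberwise_of_maps_to (g := G.dist x) (t := {k, k + 1, k + 2})]
  · simp [neighborFinsetAt, add_assoc]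
  · intro w hw
    have := ((mem_neighborFinset G v w).1 hw).diff_dist_adj (u := x)
    simp only [mem_insert, mem_singleton]
    omega

theorem din_eq_card_neighborFinsetAt {v : V} {k : ℕ} (hv : G.dist x v = k + 1) :
    din G x v = (G.neighborFinsetAt x v k).card := by
  rw [din, ← Set.ncard_coe_finset]
  congr
  ext w
  simp [hv]

theorem dout_eq_card_neighborFinsetAt {v : V} {k : ℕ} (hv : G.dist x v = k) :
    dout G x v = (G.neighborFinsetAt x v (k + 1)).card := by
  rw [dout, ← Set.ncard_coe_finset]
  congr
  ext w
  simp [hv]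

theorem finsum_din_mul_eq_sphereEdgeSum (k : ℕ) (f : V → ℝ) :
    ∑ᶠ y ∈ {y | G.dist x y = k + 1}, (din G x y : ℝ) * f y =
      sphereEdgeSum hG x (k + 1) k fun v _ => f v := by
  rw [finsum_setOf_dist_eq hG]
  refine sum_congr rfl fun v hv => ?_
  rw [din_eq_card_neighborFinsetAt x (mem_distSphere.1 hv), sum_const, nsmul_eq_mul]

theorem finsum_dout_mul_eq_sphereEdgeSum (k : ℕ) (f : V → ℝ) :
    ∑ᶠ y ∈ {y | G.dist x y = k}, (dout G x y : ℝ) * f y =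
      sphereEdgeSum hG x k (k + 1) fun v _ => f v := by
  rw [finsum_setOf_dist_eq hG]
  refine sum_congr rfl fun v hv => ?_
  rw [dout_eq_card_neighborFinsetAt x (mem_distSphere.1 hv), sum_const, nsmul_eq_mul]

theorem almgrenN_eq_sphereEdgeSum (u : V → ℝ) (k : ℕ) :
    almgrenN G x u k = sphereEdgeSum hG x k (k + 1) fun v w => u w ^ 2 - u v ^ 2 := by
  rw [almgrenN, finsum_din_mul_eq_sphereEdgeSum hG, finsum_dout_mul_eq_sphereEdgeSum hG,
    sphereEdgeSum_comm hG x (k + 1)]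
  simp only [sphereEdgeSum, ← sum_sub_distrib]

theorem finsum_din_mul_le_finsum_dout_mul (hG : G.Connected) {k : ℕ}
    (hk : ∀ v, G.dist x v = k → din G x v ≤ dout G x v)
    {f : V → ℝ} (hf : ∀ y, 0 ≤ f y) :
    ∑ᶠ y ∈ {y | G.dist x y = k}, (din G x y : ℝ) * f y ≤
      ∑ᶠ y ∈ {y | G.dist x y = k}, (dout G x y : ℝ) * f y := by
  rw [finsum_setOf_dist_eq hG, finsum_setOf_dist_eq hG]
  exact sum_le_sum fun v hv => by gcongr; exacts [hf v, hk v (mem_distSphere.1 hv)]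

theorem _root_.GraphHarmonic.sum_sq_sub_sq_nonneg {u : V → ℝ} (hu : GraphHarmonic G u) (v : V) :
    0 ≤ ∑ w ∈ G.neighborFinset v, (u w ^ 2 - u v ^ 2) := by
  have hmean : ∑ w ∈ G.neighborFinset v, (u w - u v) = 0 := by
    have := hu v
    rwa [← coe_neighborFinset, finsum_mem_coe_finset] at this
  calc 0 ≤ ∑ w ∈ G.neighborFinset v, (u w - u v) ^ 2 := sum_nonneg fun _ _ => sq_nonneg _
    _ = ∑ w ∈ G.neighborFinset v, (u w - u v) ^ 2 +
          2 * u v * ∑ w ∈ G.neighborFinset v, (u w - u v) := by rw [hmean]; ring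
    _ = ∑ w ∈ G.neighborFinset v, (u w ^ 2 - u v ^ 2) := by
      rw [mul_sum, ← sum_add_distrib]
      exact sum_congr rfl fun _ _ => by ring

theorem almgrenN_le_almgrenN_succ (hG : G.Connected) {u : V → ℝ} (hu : GraphHarmonic G u)
    (k : ℕ) :
    almgrenN G x u k ≤ almgrenN G x u (k + 1) := by
  set F : V → V → ℝ := fun v w => u w ^ 2 - u v ^ 2
  have hF : ∀ v w, F w v = -F v w := fun v w => by ring
  have hsplit : ∑ v ∈ distSphere hG x (k + 1), ∑ w ∈ G.neighborFinset v, F v w =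
      sphereEdgeSum hG x (k + 1) k F + sphereEdgeSum hG x (k + 1) (k + 1) F +
        sphereEdgeSum hG x (k + 1) (k + 2) F := by
    simp only [sphereEdgeSum, ← sum_add_distrib]
    exact sum_congr rfl fun v hv => sum_neighborFinset_eq_add_add x (mem_distSphere.1 hv) _
  rw [sphereEdgeSum_eq_neg_of_antisymm hG x hF, sphereEdgeSum_self_eq_zero_of_antisymm hG x hF,
    ← almgrenN_eq_sphereEdgeSum, ← almgrenN_eq_sphereEdgeSum] at hsplit
  have := sum_nonneg fun v (_ : v ∈ distSphere hG x (k + 1)) => hu.sum_sq_sub_sq_nonneg v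
  linarith

theorem almgrenN_monotone (hG : G.Connected) {u : V → ℝ} (hu : GraphHarmonic G u) :
    Monotone (almgrenN G x u) :=
  monotone_nat_of_le_succ (almgrenN_le_almgrenN_succ x hG hu)

end SphereEdges

end SimpleGraph

/-- doubling estimate in locally expansive regions. If `d_out(v) ≥ d_in(v)`
for all `v` with `a ≤ d(x,v) ≤ b`, then
`∑_{d(x,y)=b+1} d_in(y)u(y)² ≥ (b−a+1)·N(a) + ∑_{d(x,y)=a} d_out(y)u(y)²`. -/
theorem doubling_expansive {V : Type*} (G : SimpleGraph V) (hconn : G.Connected)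
    (hlf : ∀ v : V, (G.neighborSet v).Finite) (x : V) (u : V → ℝ)
    (hu : GraphHarmonic G u) (a b : ℕ) (hab : a ≤ b)
    (hexp : ∀ v : V, a ≤ G.dist x v → G.dist x v ≤ b → din G x v ≤ dout G x v) :
    (∑ᶠ y ∈ {y | G.dist x y = b + 1}, (din G x y : ℝ) * u y ^ 2) ≥
      ((b - a + 1 : ℕ) : ℝ) * almgrenN G x u a +
        ∑ᶠ y ∈ {y | G.dist x y = a}, (dout G x y : ℝ) * u y ^ 2 := by
  let _ : G.LocallyFinite := fun v => (hlf v).fintype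
  refine mul_add_le_of_monotone_sub
    (I := fun k => ∑ᶠ y ∈ {y | G.dist x y = k}, (din G x y : ℝ) * u y ^ 2)
    (O := fun k => ∑ᶠ y ∈ {y | G.dist x y = k}, (dout G x y : ℝ) * u y ^ 2)
    hab (SimpleGraph.almgrenN_monotone x hconn hu) fun k hak hkb => ?_
  exact SimpleGraph.finsum_din_mul_le_finsum_dout_mul x hconn
    (fun v hv => hexp v (by omega) (by omega)) fun y => sq_nonneg (u y)
end

section
/- Let G = (V,E) be a connected, locally finite simple graph, x ∈ V a fixed base vertex, and u : V → ℝ harmonic. Let 0 ≤ a ≤ b be integers and suppose G is locally contractive in {v ∈ V : a ≤ d(x,v) ≤ b}, i.e. d_out(v) ≤ d_in(v) for all vertices v with a ≤ d(x,v) ≤ b. Then ∑_{y : d(x,y)=b+1} d_in(y)·u(y)² ≤ (b − a + 1)·N(b) + ∑_{y : d(x,y)=a} d_out(y)·u(y)². -/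
section Aux
variable {V : Type*} {G : SimpleGraph V} {x : V}

lemma dist_adj_le' (hconn : G.Connected) {v y : V} (h : G.Adj v y) :
    G.dist x y ≤ G.dist x v + 1 := by
  have h1 : G.dist x y ≤ G.dist x v + G.dist v y := hconn.dist_triangle
  have h2 : G.dist v y ≤ (SimpleGraph.Walk.cons h SimpleGraph.Walk.nil).length :=
    SimpleGraph.dist_le _
  simp at h2
  omega

lemma sphere_finite' (hconn : G.Connected) (hlf : ∀ v : V, (G.neighborSet v).Finite) (x : V) :
    ∀ k : ℕ, {y | G.dist x y = k}.Finite := by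
  intro k
  induction k with
  | zero =>
    apply Set.Finite.subset (Set.finite_singleton x)
    intro y hy
    simp only [Set.mem_setOf_eq] at hy
    have := (hconn.dist_eq_zero_iff (u := x) (v := y)).mp hy
    simp [this]
  | succ k ih =>
    apply Set.Finite.subset (Set.Finite.biUnion ih (fun w _ => hlf w))
    intro y hy
    simp only [Set.mem_setOf_eq] at hy
    obtain ⟨p, hp⟩ := (hconn x y).exists_walk_length_eq_dist
    have hxy : x ≠ y := by
      rintro rfl
      simp [SimpleGraph.dist_self] at hy
    obtain ⟨w, hadj, q, hq⟩ := SimpleGraph.Walk.exists_eq_cons_of_ne (Ne.symm hxy) p.reverse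
    have hlen : q.length = k := by
      have := congrArg SimpleGraph.Walk.length hq
      simp [hp, hy] at this
      omega
    have hdw : G.dist x w = k := by
      have h1 : G.dist x w ≤ k := by
        have := SimpleGraph.dist_le q.reverse
        simpa [hlen] using this
      have h2 : G.dist x y ≤ G.dist x w + 1 := dist_adj_le' hconn hadj.symm
      omega
    exact Set.mem_biUnion (show w ∈ {y | G.dist x y = k} from hdw) hadj.symm

end Aux

/-- doubling estimate in locally contractive regions. If `d_out(v) ≤ d_in(v)`
for all `v` with `a ≤ d(x,v) ≤ b`, then
`∑_{d(x,y)=b+1} d_in(y)u(y)² ≤ (b−a+1)·N(b) + ∑_{d(x,y)=a} d_out(y)u(y)²`. -/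
theorem doubling_contractive {V : Type*} (G : SimpleGraph V) (hconn : G.Connected)
    (hlf : ∀ v : V, (G.neighborSet v).Finite) (x : V) (u : V → ℝ)
    (hu : GraphHarmonic G u) (a b : ℕ) (hab : a ≤ b)
    (hcon : ∀ v : V, a ≤ G.dist x v → G.dist x v ≤ b → dout G x v ≤ din G x v) :
    (∑ᶠ y ∈ {y | G.dist x y = b + 1}, (din G x y : ℝ) * u y ^ 2) ≤
      ((b - a + 1 : ℕ) : ℝ) * almgrenN G x u b +
        ∑ᶠ y ∈ {y | G.dist x y = a}, (dout G x y : ℝ) * u y ^ 2 := by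
  classical
  have hfin : ∀ k : ℕ, {y | G.dist x y = k}.Finite := sphere_finite' hconn hlf x
  set F : ℕ → Finset V := fun k => (hfin k).toFinset with hF
  set Nb : V → Finset V := fun v => (hlf v).toFinset with hNb
  have hmemF : ∀ (k : ℕ) (y : V), y ∈ F k ↔ G.dist x y = k := by
    intro k y; simp [hF, Set.Finite.mem_toFinset]
  have hmemNb : ∀ v y : V, y ∈ Nb v ↔ G.Adj v y := by
    intro v y; simp [hNb, Set.Finite.mem_toFinset]
  set S : ℕ → ℝ := fun k => ∑ y ∈ F (k+1), (din G x y : ℝ) * u y ^ 2 with hS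
  set T : ℕ → ℝ := fun k => ∑ y ∈ F k, (dout G x y : ℝ) * u y ^ 2 with hT
  have hSfin : ∀ k : ℕ, (∑ᶠ y ∈ {y | G.dist x y = k + 1}, (din G x y : ℝ) * u y ^ 2) = S k :=
    fun k => finsum_mem_eq_finite_toFinset_sum _ (hfin (k+1))
  have hTfin : ∀ k : ℕ, (∑ᶠ y ∈ {y | G.dist x y = k}, (dout G x y : ℝ) * u y ^ 2) = T k :=
    fun k => finsum_mem_eq_finite_toFinset_sum _ (hfin k)
  have hNform : almgrenN G x u b = S b - T b := by
    rw [almgrenN, hSfin, hTfin]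
  -- din / dout as filter cards
  have hdin : ∀ (k : ℕ) (y : V), G.dist x y = k + 1 →
      (din G x y : ℝ) = (((Nb y).filter (fun w => G.dist x w = k)).card : ℝ) := by
    intro k y hy
    have hset : {w | G.Adj y w ∧ G.dist x w = G.dist x y - 1}
        = ↑((Nb y).filter (fun w => G.dist x w = k)) := by
      ext w
      simp only [Set.mem_setOf_eq, Finset.coe_filter, hmemNb, hy, Nat.add_sub_cancel]
    rw [din, hset, Set.ncard_coe_finset]
  have hdout : ∀ (k : ℕ) (v : V), G.dist x v = k →
      (dout G x v : ℝ) = (((Nb v).filter (fun y => G.dist x y = k + 1)).card : ℝ) := by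
    intro k v hv
    have hset : {w | G.Adj v w ∧ G.dist x w = G.dist x v + 1}
        = ↑((Nb v).filter (fun y => G.dist x y = k + 1)) := by
      ext w
      simp only [Set.mem_setOf_eq, Finset.coe_filter, hmemNb, hv]
    rw [dout, hset, Set.ncard_coe_finset]
  -- the pair sum
  set P : ℕ → ℝ := fun k =>
    ∑ v ∈ F k, ∑ y ∈ (Nb v).filter (fun y => G.dist x y = k + 1), (u y ^ 2 - u v ^ 2) with hP
  have hswap : ∀ (k : ℕ) (f : V → V → ℝ),
      (∑ v ∈ F k, ∑ y ∈ (Nb v).filter (fun y => G.dist x y = k + 1), f v y)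
        = ∑ y ∈ F (k+1), ∑ v ∈ (Nb y).filter (fun v => G.dist x v = k), f v y := by
    intro k f
    apply Finset.sum_comm'
    intro v y
    simp only [Finset.mem_filter, hmemF, hmemNb]
    constructor
    · rintro ⟨h1, h2, h3⟩; exact ⟨⟨h2.symm, h1⟩, h3⟩
    · rintro ⟨⟨h1, h2⟩, h3⟩; exact ⟨h2, h1.symm, h3⟩
  have hPN : ∀ k : ℕ, P k = S k - T k := by
    intro k
    have hA : (∑ v ∈ F k, ∑ y ∈ (Nb v).filter (fun y => G.dist x y = k + 1), u y ^ 2) = S k := by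
      rw [hswap k (fun _ y => u y ^ 2), hS]
      refine Finset.sum_congr rfl fun y hy => ?_
      rw [Finset.sum_const, nsmul_eq_mul, hdin k y ((hmemF _ y).mp hy)]
    have hB : (∑ v ∈ F k, ∑ y ∈ (Nb v).filter (fun y => G.dist x y = k + 1), u v ^ 2) = T k := by
      rw [hT]
      refine Finset.sum_congr rfl fun v hv => ?_
      rw [Finset.sum_const, nsmul_eq_mul, hdout k v ((hmemF _ v).mp hv)]
    rw [hP, ← hA, ← hB, ← Finset.sum_sub_distrib]
    refine Finset.sum_congr rfl fun v _ => ?_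
    rw [← Finset.sum_sub_distrib]
  -- harmonic: per-vertex inequality
  have hharm : ∀ v : V, 0 ≤ ∑ y ∈ Nb v, (u y ^ 2 - u v ^ 2) := by
    intro v
    have h0 : ∑ y ∈ Nb v, (u y - u v) = 0 := by
      have := hu v
      rwa [finsum_mem_eq_finite_toFinset_sum _ (hlf v)] at this
    have heq : ∑ y ∈ Nb v, (u y ^ 2 - u v ^ 2)
        = (∑ y ∈ Nb v, (u y - u v) ^ 2) + 2 * u v * ∑ y ∈ Nb v, (u y - u v) := by
      rw [Finset.mul_sum, ← Finset.sum_add_distrib]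
      refine Finset.sum_congr rfl fun y _ => by ring
    rw [heq, h0, mul_zero, add_zero]
    exact Finset.sum_nonneg fun y _ => sq_nonneg _
  -- monotonicity of P
  have hmono : ∀ k : ℕ, P k ≤ P (k + 1) := by
    intro k
    have key : 0 ≤ ∑ v ∈ F (k+1), ∑ y ∈ Nb v, (u y ^ 2 - u v ^ 2) :=
      Finset.sum_nonneg fun v _ => hharm v
    have hsplit : ∀ v ∈ F (k+1), (∑ y ∈ Nb v, (u y ^ 2 - u v ^ 2)) =
        (∑ y ∈ (Nb v).filter (fun y => G.dist x y = k), (u y ^ 2 - u v ^ 2))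
        + ((∑ y ∈ (Nb v).filter (fun y => G.dist x y = k + 1), (u y ^ 2 - u v ^ 2))
        + (∑ y ∈ (Nb v).filter (fun y => G.dist x y = k + 2), (u y ^ 2 - u v ^ 2))) := by
      intro v hv
      have hdv : G.dist x v = k + 1 := (hmemF _ v).mp hv
      have hrange : ∀ y ∈ Nb v,
          G.dist x y = k ∨ G.dist x y = k + 1 ∨ G.dist x y = k + 2 := by
        intro y hy
        have hadj := (hmemNb v y).mp hy
        have h1 : G.dist x y ≤ G.dist x v + 1 := dist_adj_le' hconn hadj
        have h2 : G.dist x v ≤ G.dist x y + 1 := dist_adj_le' hconn hadj.symm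
        omega
      have e0 := Finset.sum_filter_add_sum_filter_not (Nb v)
        (fun y => G.dist x y = k) (fun y => u y ^ 2 - u v ^ 2)
      have e1 := Finset.sum_filter_add_sum_filter_not
        ((Nb v).filter (fun y => ¬ G.dist x y = k))
        (fun y => G.dist x y = k + 1) (fun y => u y ^ 2 - u v ^ 2)
      have e2 : ((Nb v).filter (fun y => ¬ G.dist x y = k)).filter
          (fun y => G.dist x y = k + 1) = (Nb v).filter (fun y => G.dist x y = k + 1) := by
        rw [Finset.filter_filter]
        exact Finset.filter_congr fun y _ => by omega
      have e3 : ((Nb v).filter (fun y => ¬ G.dist x y = k)).filter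
          (fun y => ¬ G.dist x y = k + 1) = (Nb v).filter (fun y => G.dist x y = k + 2) := by
        rw [Finset.filter_filter]
        refine Finset.filter_congr fun y hy => ?_
        have := hrange y hy
        omega
      rw [e2, e3] at e1
      linarith
    have hkey2 : (∑ v ∈ F (k+1), ∑ y ∈ Nb v, (u y ^ 2 - u v ^ 2))
        = (∑ v ∈ F (k+1), ∑ y ∈ (Nb v).filter (fun y => G.dist x y = k), (u y ^ 2 - u v ^ 2))
        + ((∑ v ∈ F (k+1), ∑ y ∈ (Nb v).filter (fun y => G.dist x y = k + 1),
              (u y ^ 2 - u v ^ 2))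
        + (∑ v ∈ F (k+1), ∑ y ∈ (Nb v).filter (fun y => G.dist x y = k + 2),
              (u y ^ 2 - u v ^ 2))) := by
      rw [← Finset.sum_add_distrib, ← Finset.sum_add_distrib]
      exact Finset.sum_congr rfl hsplit
    have hterm1 : (∑ v ∈ F (k+1), ∑ y ∈ (Nb v).filter (fun y => G.dist x y = k),
        (u y ^ 2 - u v ^ 2)) = - P k := by
      rw [← hswap k (fun v y => u v ^ 2 - u y ^ 2), hP, ← Finset.sum_neg_distrib]
      refine Finset.sum_congr rfl fun v _ => ?_
      rw [← Finset.sum_neg_distrib]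
      exact Finset.sum_congr rfl fun y _ => by ring
    have hswap2 : ∀ f : V → V → ℝ,
        (∑ v ∈ F (k+1), ∑ y ∈ (Nb v).filter (fun y => G.dist x y = k + 1), f v y)
          = ∑ y ∈ F (k+1), ∑ v ∈ (Nb y).filter (fun v => G.dist x v = k + 1), f v y := by
      intro f
      apply Finset.sum_comm'
      intro v y
      simp only [Finset.mem_filter, hmemF, hmemNb]
      constructor
      · rintro ⟨h1, h2, h3⟩; exact ⟨⟨h2.symm, h1⟩, h3⟩
      · rintro ⟨⟨h1, h2⟩, h3⟩; exact ⟨h2, h1.symm, h3⟩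
    have hterm2 : (∑ v ∈ F (k+1), ∑ y ∈ (Nb v).filter (fun y => G.dist x y = k + 1),
        (u y ^ 2 - u v ^ 2)) = 0 := by
      have hsym := hswap2 (fun v y => u y ^ 2 - u v ^ 2)
      have hzero : (∑ v ∈ F (k+1), ∑ y ∈ (Nb v).filter (fun y => G.dist x y = k + 1),
            (u y ^ 2 - u v ^ 2))
          + (∑ v ∈ F (k+1), ∑ y ∈ (Nb v).filter (fun y => G.dist x y = k + 1),
            (u v ^ 2 - u y ^ 2)) = 0 := by
        rw [← Finset.sum_add_distrib]
        refine Finset.sum_eq_zero fun v _ => ?_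
        rw [← Finset.sum_add_distrib]
        exact Finset.sum_eq_zero fun y _ => by ring
      linarith
    have hterm3 : (∑ v ∈ F (k+1), ∑ y ∈ (Nb v).filter (fun y => G.dist x y = k + 2),
        (u y ^ 2 - u v ^ 2)) = P (k + 1) := rfl
    rw [hkey2, hterm1, hterm2, hterm3] at key
    linarith
  have hmono' : ∀ k l : ℕ, k ≤ l → P k ≤ P l := by
    intro k l hkl
    induction l, hkl using Nat.le_induction with
    | base => exact le_rfl
    | succ l hkl ih => exact le_trans ih (hmono l)
  -- contractivity
  have hcontr : ∀ k : ℕ, a ≤ k + 1 → k + 1 ≤ b → T (k + 1) ≤ S k := by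
    intro k h1 h2
    refine Finset.sum_le_sum fun y hy => ?_
    have hdy : G.dist x y = k + 1 := (hmemF _ y).mp hy
    have hc := hcon y (by rw [hdy]; exact h1) (by rw [hdy]; exact h2)
    exact mul_le_mul_of_nonneg_right (Nat.cast_le.mpr hc) (sq_nonneg _)
  -- main induction
  have hmain : ∀ j : ℕ, a ≤ j → j ≤ b → S j ≤ ((j - a + 1 : ℕ) : ℝ) * (S b - T b) + T a := by
    intro j haj
    induction j, haj using Nat.le_induction with
    | base =>
      intro _
      have h1 : S a - T a ≤ S b - T b := by rw [← hPN, ← hPN]; exact hmono' a b hab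
      have h2 : ((a - a + 1 : ℕ) : ℝ) = 1 := by simp
      rw [h2]
      linarith
    | succ j hj ih =>
      intro hjb
      have ih' := ih (by omega)
      have hc := hcontr j (by omega) hjb
      have h1 : S (j + 1) - T (j + 1) ≤ S b - T b := by
        rw [← hPN, ← hPN]; exact hmono' (j + 1) b hjb
      have hcast : ((j + 1 - a + 1 : ℕ) : ℝ) = ((j - a + 1 : ℕ) : ℝ) + 1 := by
        have : j + 1 - a + 1 = (j - a + 1) + 1 := by omega
        rw [this]; push_cast; ring
      rw [hcast]
      nlinarith [hPN b, hmono' j b (by omega)]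
  have := hmain b hab le_rfl
  rw [hSfin b, hTfin a, hNform]
  exact this
end

section
/- Consider the infinite 3-regular tree with a fixed root x, whose three branches are labeled. Define u to be 0 at the root and on all vertices of the first branch, u(v) = 2 − 1/2^{n−1} for every vertex v at distance n ≥ 1 from the root in the second branch, and u(v) = −(2 − 1/2^{n−1}) for every vertex v at distance n ≥ 1 in the third branch. Then u is a non-constant harmonic function, its values lie in [−2,2], and the Almgren quantity N(k) = ∑_{d(x,y)=k+1} u(y)² − 2·∑_{d(x,y)=k} u(y)² equals 8 − 3/2^{k−1} for every k ≥ 1; in particular N(k) is non-negative, strictly increasing, and converges to 8. -/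
/-- Vertices of the rooted 3-regular tree with labeled branches: `none` is the root `x`;
`some (b, l)` is the vertex of branch `b ∈ Fin 3` reached from the root by first moving
into branch `b` and then following the steps recorded in `l` (each subsequent vertex has
two children, so steps are labeled by `Fin 2`; the vertex `some (b, l)` is at distance
`l.length + 1` from the root). -/
abbrev TreeVertex : Type := Option (Fin 3 × List (Fin 2))

/-- Adjacency in the rooted 3-regular tree. -/
def treeAdj : TreeVertex → TreeVertex → Prop
  | none, none => False
  | none, some (_, l) => l = []
  | some (_, l), none => l = []
  | some (b, l), some (b', l') => b = b' ∧ ∃ s : Fin 2, l' = s :: l ∨ l = s :: l'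

/-- The infinite 3-regular tree (with labeled branches), as a simple graph. -/
def treeGraph : SimpleGraph TreeVertex where
  Adj := treeAdj
  symm := by
    refine ⟨?_⟩
    intro a b h
    match a, b with
    | none, some (c, l) => exact h
    | some (c, l), none => exact h
    | some (c, l), some (c', l') =>
      obtain ⟨hb, s, hs⟩ := h
      exact ⟨hb.symm, s, hs.symm⟩
  loopless := by
    refine ⟨?_⟩
    rintro (_ | ⟨b, l⟩) h
    · exact h
    · obtain ⟨-, s, hs⟩ := h
      rcases hs with hs | hs <;> exact absurd (congrArg List.length hs) (by simp)

/-- The harmonic function from the paper: `0` on the root and on the first branch,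
`2 − 1/2^{n−1}` at distance `n` on the second branch, and `−(2 − 1/2^{n−1})` at
distance `n` on the third branch (the vertex `some (b, l)` is at distance
`n = l.length + 1`). -/
noncomputable def treeU : TreeVertex → ℝ
  | none => 0
  | some (b, l) =>
    if b = 0 then 0
    else if b = 1 then 2 - 1 / 2 ^ l.length
    else -(2 - 1 / 2 ^ l.length)

/-- The Almgren quantity for the 3-regular tree (here `d_in ≡ 1`, `d_out ≡ 2` away from
the root): `N(k) = ∑_{d(x,y)=k+1} u(y)² − 2∑_{d(x,y)=k} u(y)²`. -/
noncomputable def treeN (k : ℕ) : ℝ :=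
  (∑ᶠ y ∈ {y : TreeVertex | treeGraph.dist none y = k + 1}, treeU y ^ 2) -
    2 * ∑ᶠ y ∈ {y : TreeVertex | treeGraph.dist none y = k}, treeU y ^ 2

/-! The vertex `some (b, l)` is joined to its parent and to its two children `some (b, s :: l)`,
and every edge arises this way. The edge to the parent of `v` is the only edge leaving the subtree
below `v`, so every edge is a bridge and the graph is acyclic.

On branch `b`, at distance `n` from the root, `treeU = branchSign b * radial n` with
`radial n = 2 - 2 / 2 ^ n`; the recurrence `radial n + 2 radial (n + 2) = 3 radial (n + 1)` is
harmonicity off the root, and at the root the three signs cancel. The sphere of radius `n ≥ 1`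
has `2 ^ (n - 1)` vertices on each branch, so it contributes `2 ^ n * radial n ^ 2` to the
sums in `treeN`, which gives the closed form `N (m + 1) = 8 - 3 / 2 ^ m`. -/

open SimpleGraph

namespace TreeVertex

def depth : TreeVertex → ℕ
  | none => 0
  | some (_, l) => l.length + 1

def parent : TreeVertex → TreeVertex
  | none => none
  | some (_, []) => none
  | some (b, _ :: l) => some (b, l)

/-- The subtree rooted at `some (b, l)`: steps away from the root are prepended to the list,
so the vertices below `some (b, l)` are those whose list has `l` as a suffix. -/
def InSubtree (b : Fin 3) (l : List (Fin 2)) : TreeVertex → Prop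
  | none => False
  | some (b', l') => b' = b ∧ l <:+ l'

lemma depth_parent_add_one (b : Fin 3) (l : List (Fin 2)) :
    depth (parent (some (b, l))) + 1 = depth (some (b, l)) := by
  cases l <;> rfl

lemma inSubtree_self (b : Fin 3) (l : List (Fin 2)) : InSubtree b l (some (b, l)) :=
  ⟨rfl, List.suffix_refl l⟩

lemma not_inSubtree_parent (b : Fin 3) (l : List (Fin 2)) :
    ¬ InSubtree b l (parent (some (b, l))) := by
  cases l with
  | nil => exact id
  | cons t m => exact fun h => by simpa using h.2.length_le

lemma inSubtree_parent_iff {b b' : Fin 3} {l l' : List (Fin 2)} (h : (b', l') ≠ (b, l)) :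
    InSubtree b l (parent (some (b', l'))) ↔ InSubtree b l (some (b', l')) := by
  cases l' with
  | nil =>
    simp only [parent, InSubtree, List.suffix_nil, false_iff, not_and]
    rintro rfl rfl
    exact h rfl
  | cons t m =>
    simp only [parent, InSubtree, List.suffix_cons_iff, and_congr_right_iff]
    rintro rfl
    refine ⟨Or.inr, fun h' => h'.resolve_left ?_⟩
    rintro rfl
    exact h rfl

end TreeVertex

open TreeVertex

lemma treeGraph_adj_parent (b : Fin 3) (l : List (Fin 2)) :
    treeGraph.Adj (parent (some (b, l))) (some (b, l)) := by
  cases l with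
  | nil => exact rfl
  | cons s l => exact ⟨rfl, s, .inl rfl⟩

lemma treeGraph_adj_iff {u v : TreeVertex} :
    treeGraph.Adj u v ↔ ∃ b l, s(u, v) = s(parent (some (b, l)), some (b, l)) := by
  refine ⟨fun h => ?_, fun ⟨b, l, e⟩ => ?_⟩
  · match u, v, h with
    | none, some (c, _), rfl => exact ⟨c, [], rfl⟩
    | some (c, _), none, rfl => exact ⟨c, [], Sym2.eq_swap⟩
    | some (c, l), some (_, _), ⟨rfl, s, .inl rfl⟩ => exact ⟨c, s :: l, rfl⟩
    | some (c, _), some (_, l), ⟨rfl, s, .inr rfl⟩ => exact ⟨c, s :: l, Sym2.eq_swap⟩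
  · rw [← treeGraph.mem_edgeSet, e]
    exact treeGraph_adj_parent b l

lemma depth_le_depth_add_one_of_adj {u v : TreeVertex} (h : treeGraph.Adj u v) :
    depth v ≤ depth u + 1 := by
  obtain ⟨b, l, e⟩ := treeGraph_adj_iff.mp h
  have := depth_parent_add_one b l
  rcases Sym2.eq_iff.mp e with ⟨rfl, rfl⟩ | ⟨rfl, rfl⟩ <;> omega

lemma depth_le_depth_add_length {u v : TreeVertex} (p : treeGraph.Walk u v) :
    depth v ≤ depth u + p.length := by
  induction p with
  | nil => simp
  | cons h p ih =>
    have := depth_le_depth_add_one_of_adj h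
    rw [Walk.length_cons]
    omega

lemma exists_walk_from_root_length_eq_depth :
    ∀ v : TreeVertex, ∃ p : treeGraph.Walk none v, p.length = depth v
  | none => ⟨.nil, rfl⟩
  | some (b, l) => by
    obtain ⟨p, hp⟩ := exists_walk_from_root_length_eq_depth (parent (some (b, l)))
    refine ⟨p.concat (treeGraph_adj_parent b l), ?_⟩
    rw [Walk.length_concat, hp, depth_parent_add_one]
termination_by v => depth v
decreasing_by have := depth_parent_add_one b l; omega

lemma treeGraph_connected : treeGraph.Connected := by
  rw [connected_iff_exists_forall_reachable]
  exact ⟨none, fun v => (exists_walk_from_root_length_eq_depth v).elim fun p _ => ⟨p⟩⟩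

lemma treeGraph_dist_root (v : TreeVertex) : treeGraph.dist none v = depth v := by
  obtain ⟨p, hp⟩ := exists_walk_from_root_length_eq_depth v
  obtain ⟨q, hq⟩ := p.reachable.exists_walk_length_eq_dist
  have hlower : depth v ≤ treeGraph.dist none v := by
    simpa [depth, hq] using depth_le_depth_add_length q
  exact le_antisymm (hp ▸ dist_le p) hlower

lemma eq_parent_edge_of_adj_of_inSubtree {b : Fin 3} {l : List (Fin 2)} {u v : TreeVertex}
    (h : treeGraph.Adj u v) (hu : ¬ InSubtree b l u) (hv : InSubtree b l v) :
    s(u, v) = s(parent (some (b, l)), some (b, l)) := by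
  obtain ⟨b', l', e⟩ := treeGraph_adj_iff.mp h
  by_cases hbl : (b', l') = (b, l)
  · simpa [hbl] using e
  · have := inSubtree_parent_iff hbl
    rcases Sym2.eq_iff.mp e with ⟨rfl, rfl⟩ | ⟨rfl, rfl⟩ <;> tauto

lemma treeGraph_isAcyclic : treeGraph.IsAcyclic := by
  refine isAcyclic_iff_forall_adj_isBridge.mpr fun u v h => ?_
  obtain ⟨b, l, e⟩ := treeGraph_adj_iff.mp h
  rw [e, isBridge_iff_forall_walk_mem_edges]
  intro p
  obtain ⟨d, hd, hout, hin⟩ := p.exists_boundary_dart {w | ¬ InSubtree b l w}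
    (not_inSubtree_parent b l) (not_not_intro (inSubtree_self b l))
  rw [← eq_parent_edge_of_adj_of_inSubtree d.adj hout (not_not.mp hin)]
  exact List.mem_map_of_mem hd

lemma treeGraph_neighborSet_root :
    treeGraph.neighborSet none =
      ↑(Finset.univ.image fun b : Fin 3 => (some (b, []) : TreeVertex)) := by
  ext (_ | ⟨b, l⟩)
  · simp [neighborSet]
  · change l = [] ↔ _
    simp

lemma treeGraph_neighborSet_some (b : Fin 3) (l : List (Fin 2)) :
    treeGraph.neighborSet (some (b, l)) =
      ↑({parent (some (b, l)), some (b, 0 :: l), some (b, 1 :: l)} : Finset TreeVertex) := by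
  ext (_ | ⟨b', l'⟩)
  · change treeAdj (some (b, l)) none ↔ _
    cases l <;> simp [treeAdj, parent]
  · change (b = b' ∧ ∃ s : Fin 2, l' = s :: l ∨ l = s :: l') ↔ _
    cases l <;> simp [parent, Fin.exists_fin_two] <;> grind

lemma parent_ne_child (b : Fin 3) (l : List (Fin 2)) (s : Fin 2) :
    parent (some (b, l)) ≠ some (b, s :: l) := by
  have := depth_parent_add_one b l
  exact fun h => by simp only [h, depth, List.length_cons] at this; omega

lemma treeGraph_ncard_neighborSet (v : TreeVertex) : (treeGraph.neighborSet v).ncard = 3 := by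
  rcases v with _ | ⟨b, l⟩
  · rw [treeGraph_neighborSet_root, Set.ncard_coe_finset, Finset.card_image_of_injective]
    · rfl
    · intro b b' h; simpa using h
  · rw [treeGraph_neighborSet_some, Set.ncard_coe_finset, Finset.card_insert_of_notMem,
      Finset.card_pair]
    · simp
    · simp [parent_ne_child]

def branchSign : Fin 3 → ℝ := ![0, 1, -1]

noncomputable def radial (n : ℕ) : ℝ := 2 - 2 / 2 ^ n

lemma radial_recurrence (n : ℕ) : radial n + 2 * radial (n + 2) = 3 * radial (n + 1) := by
  simp only [radial, pow_succ]
  field_simp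
  ring

lemma radial_mem_Icc (n : ℕ) : radial n ∈ Set.Icc (0 : ℝ) 2 := by
  have : (2 : ℝ) / 2 ^ n ≤ 2 := div_le_self zero_le_two (one_le_pow₀ one_le_two)
  constructor <;> simp only [radial] <;> linarith [show (0 : ℝ) ≤ 2 / 2 ^ n by positivity]

lemma treeU_some (b : Fin 3) (l : List (Fin 2)) :
    treeU (some (b, l)) = branchSign b * radial (l.length + 1) := by
  have : (2 : ℝ) - 1 / 2 ^ l.length = radial (l.length + 1) := by
    simp only [radial, pow_succ]
    field_simp
  rw [← this]
  fin_cases b <;> simp [treeU, branchSign]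

lemma treeU_parent (b : Fin 3) (l : List (Fin 2)) :
    treeU (parent (some (b, l))) = branchSign b * radial l.length := by
  cases l with
  | nil => simp [treeU, parent, radial]
  | cons t m => simp [parent, treeU_some]

lemma treeU_harmonic (v : TreeVertex) :
    ∑ᶠ y ∈ treeGraph.neighborSet v, (treeU y - treeU v) = 0 := by
  rcases v with _ | ⟨b, l⟩
  · rw [treeGraph_neighborSet_root, finsum_mem_coe_finset,
      Finset.sum_image fun _ _ _ _ h => by simpa using h]
    simp [Fin.sum_univ_three, treeU]
  · rw [treeGraph_neighborSet_some, finsum_mem_coe_finset,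
      Finset.sum_insert (by simp [parent_ne_child]), Finset.sum_pair (by simp),
      treeU_parent, treeU_some, treeU_some, treeU_some]
    linear_combination branchSign b * radial_recurrence l.length

lemma treeU_mem_Icc (v : TreeVertex) : treeU v ∈ Set.Icc (-2 : ℝ) 2 := by
  rcases v with _ | ⟨b, l⟩
  · simp [treeU]
  · obtain ⟨h0, h2⟩ := radial_mem_Icc (l.length + 1)
    rw [treeU_some]
    fin_cases b <;> simp [branchSign] <;> constructor <;> linarith

lemma treeGraph_sphere_root_succ (m : ℕ) :
    {y : TreeVertex | treeGraph.dist none y = m + 1} =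
      ↑(Finset.univ.image fun q : Fin 3 × List.Vector (Fin 2) m =>
        (some (q.1, q.2.toList) : TreeVertex)) := by
  ext (_ | ⟨b, l⟩)
  · simp [treeGraph_dist_root, depth]
  · suffices l.length = m ↔ ∃ v : List.Vector (Fin 2) m, v.toList = l by
      simpa [treeGraph_dist_root, depth]
    exact ⟨fun h => ⟨⟨l, h⟩, rfl⟩, by rintro ⟨v, rfl⟩; exact v.toList_length⟩

lemma finsum_sphere_root_succ_treeU_sq (m : ℕ) :
    ∑ᶠ y ∈ {y : TreeVertex | treeGraph.dist none y = m + 1}, treeU y ^ 2 =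
      2 ^ (m + 1) * radial (m + 1) ^ 2 := by
  rw [treeGraph_sphere_root_succ, finsum_mem_coe_finset,
    Finset.sum_image fun _ _ _ _ h => by
      simpa [Prod.ext_iff, List.Vector.toList_injective.eq_iff] using h,
    Fintype.sum_prod_type]
  simp [treeU_some, Fin.sum_univ_three, branchSign, card_vector]
  ring

lemma treeN_succ (m : ℕ) : treeN (m + 1) = 8 - 3 / 2 ^ m := by
  rw [treeN, finsum_sphere_root_succ_treeU_sq, finsum_sphere_root_succ_treeU_sq]
  simp only [radial, pow_succ]
  field_simp
  ring

lemma treeN_succ_nonneg (m : ℕ) : 0 ≤ treeN (m + 1) := by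
  have : (3 : ℝ) / 2 ^ m ≤ 3 := div_le_self zero_le_three (one_le_pow₀ one_le_two)
  rw [treeN_succ]
  linarith

lemma treeN_succ_lt_succ_succ (m : ℕ) : treeN (m + 1) < treeN (m + 2) := by
  have : (3 : ℝ) / 2 ^ (m + 1) < 3 / 2 ^ m :=
    div_lt_div_of_pos_left (by norm_num) (by positivity)
      (pow_lt_pow_right₀ (by norm_num) m.lt_succ_self)
  rw [treeN_succ, treeN_succ]
  linarith

lemma tendsto_treeN : Filter.Tendsto treeN Filter.atTop (nhds 8) := by
  rw [← Filter.tendsto_add_atTop_iff_nat 1]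
  simp_rw [treeN_succ]
  simpa using tendsto_const_nhds.sub
    (tendsto_const_nhds.div_atTop (tendsto_pow_atTop_atTop_of_one_lt (one_lt_two : (1 : ℝ) < 2)))

/-- `treeGraph` is the infinite 3-regular tree (connected, acyclic,
3-regular), `treeU` is a non-constant harmonic function on it with values in `[−2,2]`,
and the Almgren quantity satisfies `N(k) = 8 − 3/2^{k−1}` for `k ≥ 1`; in particular
`N(k)` is non-negative, strictly increasing, and converges to `8`. -/
theorem tree_example :
    treeGraph.Connected ∧ treeGraph.IsAcyclic ∧
    (∀ v : TreeVertex, (treeGraph.neighborSet v).ncard = 3) ∧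
    (∀ v : TreeVertex, ∑ᶠ y ∈ treeGraph.neighborSet v, (treeU y - treeU v) = 0) ∧
    (∃ a b : TreeVertex, treeU a ≠ treeU b) ∧
    (∀ v : TreeVertex, treeU v ∈ Set.Icc (-2 : ℝ) 2) ∧
    (∀ k : ℕ, 1 ≤ k → treeN k = 8 - 3 / 2 ^ (k - 1)) ∧
    (∀ k : ℕ, 1 ≤ k → 0 ≤ treeN k ∧ treeN k < treeN (k + 1)) ∧
    Filter.Tendsto treeN Filter.atTop (nhds 8) := by
  refine ⟨treeGraph_connected, treeGraph_isAcyclic, treeGraph_ncard_neighborSet, treeU_harmonic,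
    ⟨none, some (1, []), by norm_num [treeU]⟩, treeU_mem_Icc, ?_, ?_, tendsto_treeN⟩
  · rintro (_ | m) hk
    · omega
    · exact treeN_succ m
  · rintro (_ | m) hk
    · omega
    · exact ⟨treeN_succ_nonneg m, treeN_succ_lt_succ_succ m⟩
end
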